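/- Let Y₁(x,v,a) = (0,0,2v), Y₂(x,v,a) = (0,v,2a), Y₃(x,v,a) = (v,a,3a²/(2v)) on ℝ³, and let Y_α^[2](p₁,p₂) := (Y_α(p₁), Y_α(p₂)) denote their diagonal prolongations to ℝ⁶, with coordinates (x₁,v₁,a₁,x₂,v₂,a₂). The function F₄(x₁,v₁,a₁,x₂,v₂,a₂) = x₁ − x₂ − 2v₁v₂(v₁ + v₂)/(a₁v₂ − v₁a₂) satisfies (fderiv ℝ F₄ p)(Y_α^[2](p)) = 0 for α = 1,2,3 at every point p with v₁ ≠ 0, v₂ ≠ 0 and a₁v₂ − v₁a₂ ≠ 0. Hence F₄ is a t-independent constant of motion of the diagonal prolongation of the Schwarzian system X_t = Y₃ + b₁(t)Y₁. -/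

import Mathlib

/-- Diagonal prolongations to `ℝ⁶` of the Vessiot--Guldberg vector fields of
the Schwarzian equation; coordinates
`(x₁,v₁,a₁,x₂,v₂,a₂) = (p 0, p 1, p 2, p 3, p 4, p 5)`. -/
noncomputable def schwarzY₁p : (Fin 6 → ℝ) → (Fin 6 → ℝ) :=
  fun p => ![0, 0, 2 * p 1, 0, 0, 2 * p 4]

noncomputable def schwarzY₂p : (Fin 6 → ℝ) → (Fin 6 → ℝ) :=
  fun p => ![0, p 1, 2 * p 2, 0, p 4, 2 * p 5]

noncomputable def schwarzY₃p : (Fin 6 → ℝ) → (Fin 6 → ℝ) :=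
  fun p => ![p 1, p 2, 3 * (p 2) ^ 2 / (2 * p 1),
             p 4, p 5, 3 * (p 5) ^ 2 / (2 * p 4)]

/-- `F₄ = x₁ − x₂ − 2v₁v₂(v₁ + v₂)/(a₁v₂ − v₁a₂)`. -/
noncomputable def schwarzF₄ : (Fin 6 → ℝ) → ℝ :=
  fun p => p 0 - p 3 - 2 * p 1 * p 4 * (p 1 + p 4) / (p 2 * p 4 - p 1 * p 5)

/-!
Write `F₄ = x₁ - x₂ - N / D` with `N = 2v₁v₂(v₁ + v₂)` and `D = a₁v₂ - v₁a₂`. The field `Y₁`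
shifts `aᵢ` by `2vᵢ`, which leaves `D` unchanged; `Y₂` is the infinitesimal weighted scaling
`(v, a) ↦ (λv, λ²a)`, for which `N` and `D` are both homogeneous of degree 3. Along `Y₃`, the
`∂/∂aᵢ` components `3aᵢ²/(2vᵢ)` make the derivative of `N / D` equal to `v₁ - v₂`, which is
exactly the derivative of `x₁ - x₂`.
-/

section QuotientRule

variable {𝕜 E : Type*} [NontriviallyNormedField 𝕜] [NormedAddCommGroup E] [NormedSpace 𝕜 E]
  {f g : E → 𝕜} {f' g' : E →L[𝕜] 𝕜} {x : E}

theorem HasFDerivAt.fun_div (hf : HasFDerivAt f f' x) (hg : HasFDerivAt g g' x) (hx : g x ≠ 0) :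
    HasFDerivAt (fun y => f y / g y) ((g x ^ 2)⁻¹ • (g x • f' - f x • g')) x := by
  have h := hf.fun_mul ((hasFDerivAt_inv hx).comp x hg)
  simp only [Function.comp_def, ← div_eq_mul_inv] at h
  refine h.congr_fderiv ?_
  ext w
  simp only [add_apply, smul_apply, sub_apply, ContinuousLinearMap.comp_apply,
    ContinuousLinearMap.toSpanSingleton_apply, smul_eq_mul, mul_neg]
  field_simp
  ring

end QuotientRule

theorem fderiv_schwarzF₄_apply {p : Fin 6 → ℝ} (hD : p 2 * p 4 - p 1 * p 5 ≠ 0) (w : Fin 6 → ℝ) :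
    fderiv ℝ schwarzF₄ p w = w 0 - w 3 -
      ((2 * (w 1 * p 4 + p 1 * w 4) * (p 1 + p 4) + 2 * p 1 * p 4 * (w 1 + w 4)) *
          (p 2 * p 4 - p 1 * p 5) -
        2 * p 1 * p 4 * (p 1 + p 4) * (w 2 * p 4 + p 2 * w 4 - w 1 * p 5 - p 1 * w 5)) /
      (p 2 * p 4 - p 1 * p 5) ^ 2 := by
  have hx (i : Fin 6) := hasFDerivAt_apply (𝕜 := ℝ) i p
  have hN := (((hx 1).const_mul 2).fun_mul (hx 4)).fun_mul ((hx 1).fun_add (hx 4))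
  have hDen := ((hx 2).fun_mul (hx 4)).fun_sub ((hx 1).fun_mul (hx 5))
  unfold schwarzF₄
  rw [(((hx 0).fun_sub (hx 3)).fun_sub (hN.fun_div hDen hD)).fderiv]
  simp only [smul_add, sub_apply, ContinuousLinearMap.proj_apply, smul_apply, add_apply, smul_eq_mul]
  field_simp
  ring

theorem fderiv_schwarzF₄_schwarzY₁p {p : Fin 6 → ℝ} (hD : p 2 * p 4 - p 1 * p 5 ≠ 0) :
    fderiv ℝ schwarzF₄ p (schwarzY₁p p) = 0 := by
  rw [fderiv_schwarzF₄_apply hD]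
  simp only [schwarzY₁p, Matrix.cons_val]
  ring

theorem fderiv_schwarzF₄_schwarzY₂p {p : Fin 6 → ℝ} (hD : p 2 * p 4 - p 1 * p 5 ≠ 0) :
    fderiv ℝ schwarzF₄ p (schwarzY₂p p) = 0 := by
  rw [fderiv_schwarzF₄_apply hD]
  simp only [schwarzY₂p, Matrix.cons_val]
  ring

theorem fderiv_schwarzF₄_schwarzY₃p {p : Fin 6 → ℝ} (h₁ : p 1 ≠ 0) (h₄ : p 4 ≠ 0)
    (hD : p 2 * p 4 - p 1 * p 5 ≠ 0) :
    fderiv ℝ schwarzF₄ p (schwarzY₃p p) = 0 := by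
  rw [fderiv_schwarzF₄_apply hD, sub_eq_zero, eq_div_iff (pow_ne_zero 2 hD)]
  simp only [schwarzY₃p, Matrix.cons_val]
  field_simp
  ring

/-- `F₄` is annihilated by the diagonal prolongations of
`Y₁, Y₂, Y₃` wherever `v₁ ≠ 0`, `v₂ ≠ 0` and `a₁v₂ − v₁a₂ ≠ 0`; hence it is
a t-independent constant of motion of the prolonged Schwarzian system. -/
theorem schwarzian_constant_of_motion_F4 :
    ∀ p : Fin 6 → ℝ, p 1 ≠ 0 → p 4 ≠ 0 → p 2 * p 4 - p 1 * p 5 ≠ 0 →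
      fderiv ℝ schwarzF₄ p (schwarzY₁p p) = 0 ∧
      fderiv ℝ schwarzF₄ p (schwarzY₂p p) = 0 ∧
      fderiv ℝ schwarzF₄ p (schwarzY₃p p) = 0 :=
  fun _ h₁ h₄ hD => ⟨fderiv_schwarzF₄_schwarzY₁p hD, fderiv_schwarzF₄_schwarzY₂p hD,
    fderiv_schwarzF₄_schwarzY₃p h₁ h₄ hD⟩
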